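/- arXiv:hep-th/9410108 — 3 statements merged into one kernel-verified Lean document; each statement's English description precedes it below -/
import Mathlib

section
/- On the graded space C^•(V,V) = ⨁_n Hom(V^⊗n, V), the Gerstenhaber bracket [f,g] = f∘g − (−1)^{(m−1)(n−1)} g∘f, where f∘g = Σ_i (−1)^{(i−1)(n−1)} f ∘_i g for f of arity m and g of arity n, satisfies the graded Jacobi identity, making C^•(V,V)[1] a graded Lie algebra. -/
open Finset

/-- `n`-ary operations on `V`, modeled on argument streams. -/
abbrev Op (V : Type*) := (ℕ → V) → V

/-- Extend a multilinear map `Hom(V^⊗n, V)` to an operation on argument streams. -/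
def ext {V : Type*} [AddCommGroup V] [Module ℂ V] {n : ℕ}
    (f : MultilinearMap ℂ (fun _ : Fin n => V) V) : Op V :=
  fun v => f fun j => v j

/-- The operadic partial composition `f ∘ᵢ g` (0-based index `i`), `m` = arity of `g`. -/
def opComp {V : Type*} (f : Op V) (m : ℕ) (g : Op V) (i : ℕ) : Op V :=
  fun v => f fun j =>
    if j < i then v j else if j = i then g (fun k => v (i + k)) else v (j + m - 1)

/-- The Gerstenhaber circle product `f ∘ g = Σᵢ (−1)^{i(n−1)} f ∘ᵢ g` (0-based sum),
for `f` of arity `m` and `g` of arity `n`. -/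
def gcirc {V : Type*} [AddCommGroup V] (m : ℕ) (f : Op V) (n : ℕ) (g : Op V) : Op V :=
  ∑ i ∈ Finset.range m, ((-1 : ℤ) ^ (i * (n - 1))) • opComp f n g i

/-- The Gerstenhaber bracket `[f,g] = f∘g − (−1)^{(m−1)(n−1)} g∘f`. -/
def gbracket {V : Type*} [AddCommGroup V] (m : ℕ) (f : Op V) (n : ℕ) (g : Op V) : Op V :=
  gcirc m f n g - ((-1 : ℤ) ^ ((m - 1) * (n - 1))) • gcirc n g m f

/-!
The circle product is right graded pre-Lie: the associator `(f ∘ g) ∘ h - f ∘ (g ∘ h)` is graded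
symmetric in `g` and `h`. Expanding `(f ∘ g) ∘ h` as a double sum of insertions `(f ∘ᵢ g) ∘ⱼ h`,
the terms in which `h` lands inside `g` reassemble to `f ∘ (g ∘ h)`; in the remaining terms `g` and
`h` occupy disjoint slots of `f`, and exchanging them matches these terms bijectively with those of
`(f ∘ h) ∘ g`, up to the Koszul sign `(-1)^{(n-1)(p-1)}`. The graded Jacobi identity is a formal
consequence of this symmetry.
-/

section

variable {V : Type*}

def DependsOnFirst (n : ℕ) (f : Op V) : Prop :=
  ∀ v w : ℕ → V, (∀ k < n, v k = w k) → f v = f w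

theorem ext_dependsOnFirst [AddCommGroup V] [Module ℂ V] {n : ℕ}
    (F : MultilinearMap ℂ (fun _ : Fin n => V) V) : DependsOnFirst n (ext F) :=
  fun _ _ hvw => congrArg F (funext fun j => hvw j j.isLt)

theorem opComp_opComp_of_le_of_lt (f : Op V) (n : ℕ) (g : Op V) (p : ℕ) (h : Op V) {i j : ℕ}
    (hij : i ≤ j) (hj : j < i + n) :
    opComp (opComp f n g i) p h j = opComp f (n + p - 1) (opComp g p h (j - i)) i := by
  funext v
  simp only [opComp]
  congr 1; funext k
  split_ifs <;> first | omega | rfl | (congr 1; omega) | skip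
  congr 1; funext t
  split_ifs <;> first | omega | rfl | (congr 1; omega) | (congr 1; funext s; congr 1; omega)

/- `h` is applied to the whole argument stream: past its `p`-th argument, the left side feeds it
the arguments of `g` and the right side the output of `g`. -/
theorem opComp_opComp_of_lt (f : Op V) (n : ℕ) (g : Op V) (p : ℕ) {h : Op V}
    (hh : DependsOnFirst p h) {i j : ℕ} (hji : j < i) :
    opComp (opComp f n g i) p h j = opComp (opComp f p h j) n g (i + p - 1) := by
  funext v
  simp only [opComp]
  congr 1; funext k
  split_ifs <;> first | omega | rfl | (congr 1; omega) | skip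
  · exact hh _ _ fun t _ => (if_pos (by omega)).symm
  · congr 1; funext t
    split_ifs <;> first | omega | (congr 1; omega)

section Linearity

variable [AddCommGroup V]

def opCompLeft (n : ℕ) (g : Op V) (i : ℕ) : Op V →+ Op V where
  toFun f := opComp f n g i
  map_zero' := rfl
  map_add' _ _ := rfl

theorem opComp_sum_left {ι : Type*} (s : Finset ι) (f : ι → Op V) (n : ℕ) (g : Op V) (i : ℕ) :
    opComp (∑ x ∈ s, f x) n g i = ∑ x ∈ s, opComp (f x) n g i :=
  map_sum (opCompLeft n g i) f s

theorem opComp_zsmul_left (z : ℤ) (f : Op V) (n : ℕ) (g : Op V) (i : ℕ) :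
    opComp (z • f) n g i = z • opComp f n g i :=
  rfl

theorem gcirc_sub_zsmul_left (m : ℕ) (f₁ f₂ : Op V) (z : ℤ) (n : ℕ) (g : Op V) :
    gcirc m (f₁ - z • f₂) n g = gcirc m f₁ n g - z • gcirc m f₂ n g := by
  simp only [gcirc, smul_sum, ← sum_sub_distrib, smul_comm z, ← smul_sub]
  rfl

variable [Module ℂ V] {m : ℕ} (F : MultilinearMap ℂ (fun _ : Fin m => V) V) (n : ℕ)

theorem opComp_ext_apply {i : ℕ} (hi : i < m) (g : Op V) (v : ℕ → V) :
    opComp (ext F) n g i v =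
      F.toLinearMap (fun j : Fin m => if (j : ℕ) < i then v j else v (j + n - 1)) ⟨i, hi⟩
        (g fun k => v (i + k)) := by
  refine congrArg F (funext fun j => ?_)
  rcases eq_or_ne j ⟨i, hi⟩ with rfl | hj
  · simp
  · simp [Function.update_of_ne hj, Fin.val_ne_iff.2 hj]

def opCompExtRight {i : ℕ} (hi : i < m) : Op V →+ Op V :=
  AddMonoidHom.mk' (opComp (ext F) n · i) fun g₁ g₂ => funext fun v => by
    simp only [Pi.add_apply, opComp_ext_apply F n hi, map_add]

theorem opComp_ext_sum_zsmul_right {i : ℕ} (hi : i < m) {ι : Type*} (s : Finset ι) (z : ι → ℤ)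
    (g : ι → Op V) :
    opComp (ext F) n (∑ x ∈ s, z x • g x) i = ∑ x ∈ s, z x • opComp (ext F) n (g x) i := by
  have h := map_sum (opCompExtRight F n hi) (fun x => z x • g x) s
  simp only [map_zsmul] at h
  exact h

theorem gcirc_ext_sub_zsmul_right (g₁ g₂ : Op V) (z : ℤ) :
    gcirc m (ext F) n (g₁ - z • g₂) = gcirc m (ext F) n g₁ - z • gcirc m (ext F) n g₂ := by
  simp only [gcirc, smul_sum, ← sum_sub_distrib, smul_comm z]
  refine sum_congr rfl fun i hi => ?_
  rw [← smul_sub]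
  congr 1
  have h := map_sub (opCompExtRight F n (mem_range.1 hi)) g₁ (z • g₂)
  rw [map_zsmul] at h
  exact h

end Linearity

section Associator

variable [AddCommGroup V] {m : ℕ}

def gcircTerm (f : Op V) (n : ℕ) (g : Op V) (p : ℕ) (h : Op V) (x : ℕ × ℕ) : Op V :=
  (-1 : ℤ) ^ (x.1 * (n - 1) + x.2 * (p - 1)) • opComp (opComp f n g x.1) p h x.2

theorem gcirc_gcirc_eq_sum (f : Op V) (n : ℕ) (g : Op V) (p : ℕ) (h : Op V) :
    gcirc (m + n - 1) (gcirc m f n g) p h =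
      ∑ x ∈ range m ×ˢ range (m + n - 1), gcircTerm f n g p h x := by
  simp only [gcirc, opComp_sum_left, opComp_zsmul_left, smul_sum, smul_smul, sum_product,
    gcircTerm, pow_add]
  rw [sum_comm]
  exact sum_congr rfl fun i _ => sum_congr rfl fun j _ => by rw [mul_comm]

theorem neg_one_pow_add_two_mul (a k : ℕ) : (-1 : ℤ) ^ (a + 2 * k) = (-1) ^ a := by
  rw [pow_add, pow_mul, neg_one_sq, one_pow, mul_one]

theorem sum_gcircTerm_lt (f : Op V) {n p : ℕ} (hp : 1 ≤ p) (g : Op V) {h : Op V}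
    (hh : DependsOnFirst p h) :
    ∑ x ∈ (range m ×ˢ range (m + n - 1)).filter (fun x => x.2 < x.1), gcircTerm f n g p h x =
      (-1 : ℤ) ^ ((n - 1) * (p - 1)) •
        ∑ x ∈ (range m ×ˢ range (m + p - 1)).filter (fun x => x.1 + p ≤ x.2),
          gcircTerm f p h n g x := by
  rw [smul_sum]
  refine sum_nbij' (fun x => (x.2, x.1 + p - 1)) (fun x => (x.2 + 1 - p, x.1)) ?_ ?_ ?_ ?_ ?_ <;>
    rintro ⟨i, j⟩ hx <;>
    simp only [mem_filter, mem_product, mem_range, Prod.mk.injEq, true_and, and_true] at hx ⊢ <;>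
    try omega
  rw [gcircTerm, gcircTerm, opComp_opComp_of_lt _ _ _ _ hh hx.2, smul_smul, ← pow_add,
    show i + p - 1 = i + (p - 1) by omega]
  congr 1
  rw [← neg_one_pow_add_two_mul _ ((n - 1) * (p - 1))]
  ring_nf

variable [Module ℂ V] (F : MultilinearMap ℂ (fun _ : Fin m => V) V)

theorem ext_gcirc_eq_sum (n : ℕ) (g : Op V) (p : ℕ) (h : Op V) :
    gcirc m (ext F) (n + p - 1) (gcirc n g p h) =
      ∑ x ∈ range m ×ˢ range n, (-1 : ℤ) ^ (x.1 * (n + p - 1 - 1) + x.2 * (p - 1)) •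
        opComp (ext F) (n + p - 1) (opComp g p h x.2) x.1 := by
  rw [sum_product]
  refine sum_congr rfl fun i hi => ?_
  rw [gcirc, opComp_ext_sum_zsmul_right F _ (mem_range.1 hi), smul_sum]
  simp only [smul_smul, pow_add]

theorem sum_gcircTerm_nested {n p : ℕ} (hp : 1 ≤ p) (g h : Op V) :
    ∑ x ∈ (range m ×ˢ range (m + n - 1)).filter (fun x => x.1 ≤ x.2 ∧ x.2 < x.1 + n),
      gcircTerm (ext F) n g p h x = gcirc m (ext F) (n + p - 1) (gcirc n g p h) := by
  rw [ext_gcirc_eq_sum]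
  refine sum_nbij' (fun x => (x.1, x.2 - x.1)) (fun x => (x.1, x.1 + x.2)) ?_ ?_ ?_ ?_ ?_ <;>
    rintro ⟨i, j⟩ hx <;>
    simp only [mem_filter, mem_product, mem_range, Prod.mk.injEq, true_and] at hx ⊢ <;>
    try omega
  obtain ⟨d, rfl⟩ : ∃ d, j = i + d := ⟨j - i, by omega⟩
  rw [gcircTerm, opComp_opComp_of_le_of_lt _ _ _ _ _ hx.2.1 hx.2.2, Nat.add_sub_cancel_left,
    show n + p - 1 - 1 = (n - 1) + (p - 1) by omega]
  congr 2
  ring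

theorem gcirc_assoc_eq_sum {n p : ℕ} (hp : 1 ≤ p) (g h : Op V) :
    gcirc (m + n - 1) (gcirc m (ext F) n g) p h - gcirc m (ext F) (n + p - 1) (gcirc n g p h) =
      ∑ x ∈ (range m ×ˢ range (m + n - 1)).filter (fun x => x.2 < x.1), gcircTerm (ext F) n g p h x
        + ∑ x ∈ (range m ×ˢ range (m + n - 1)).filter (fun x => x.1 + n ≤ x.2),
          gcircTerm (ext F) n g p h x := by
  rw [gcirc_gcirc_eq_sum, ← sum_gcircTerm_nested F hp,
    ← sum_filter_add_sum_filter_not _ (fun x => x.1 ≤ x.2 ∧ x.2 < x.1 + n), add_sub_cancel_left,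
    filter_congr (q := fun x => x.2 < x.1 ∨ x.1 + n ≤ x.2) (fun _ _ => by omega), filter_or,
    sum_union (disjoint_filter.2 fun _ _ _ => by omega)]

/- The arities `p + m - 1` and `n + p - 1` on the right are chosen so that the three cyclic
instances of this lemma match the terms of the Jacobi identity syntactically. -/
theorem gcirc_assoc_symm {n p : ℕ} (hn : 1 ≤ n) (hp : 1 ≤ p)
    (G : MultilinearMap ℂ (fun _ : Fin n => V) V) (H : MultilinearMap ℂ (fun _ : Fin p => V) V) :
    gcirc (m + n - 1) (gcirc m (ext F) n (ext G)) p (ext H)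
        - gcirc m (ext F) (n + p - 1) (gcirc n (ext G) p (ext H)) =
      (-1 : ℤ) ^ ((n - 1) * (p - 1)) •
        (gcirc (p + m - 1) (gcirc m (ext F) p (ext H)) n (ext G)
          - gcirc m (ext F) (n + p - 1) (gcirc p (ext H) n (ext G))) := by
  conv_rhs => rw [Nat.add_comm p m, Nat.add_comm n p]
  rw [gcirc_assoc_eq_sum F hp, gcirc_assoc_eq_sum F hn,
    sum_gcircTerm_lt _ hp _ (ext_dependsOnFirst H), sum_gcircTerm_lt _ hn _ (ext_dependsOnFirst G),
    mul_comm (p - 1), smul_add, smul_smul, ← mul_pow, neg_one_mul, neg_neg, one_pow, one_smul,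
    add_comm]

end Associator

theorem neg_one_pow_mul_add_sub_one (k : ℕ) {n p : ℕ} (hn : 1 ≤ n) (hp : 1 ≤ p) :
    (-1 : ℤ) ^ (k * (n + p - 1 - 1)) = (-1) ^ (k * (n - 1)) * (-1) ^ (k * (p - 1)) := by
  rw [show n + p - 1 - 1 = (n - 1) + (p - 1) by omega, mul_add, pow_add]

theorem jacobi_of_rightPreLie {M : Type*} [AddCommGroup M] {ε₁ ε₂ ε₃ : ℤ}
    (h₁ : ε₁ = 1 ∨ ε₁ = -1) (h₂ : ε₂ = 1 ∨ ε₂ = -1) (h₃ : ε₃ = 1 ∨ ε₃ = -1)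
    {f_gh f_hg g_hf g_fh h_fg h_gf fg_h fh_g gh_f gf_h hf_g hg_f : M}
    (hf : fg_h - f_gh = ε₂ • (fh_g - f_hg)) (hg : gh_f - g_hf = ε₃ • (gf_h - g_fh))
    (hh : hf_g - h_fg = ε₁ • (hg_f - h_gf)) :
    ε₃ • (f_gh - ε₂ • f_hg - (ε₁ * ε₃) • (gh_f - ε₂ • hg_f))
      + ε₁ • (g_hf - ε₃ • g_fh - (ε₂ * ε₁) • (hf_g - ε₃ • fh_g))
      + ε₂ • (h_fg - ε₁ • h_gf - (ε₃ * ε₂) • (fg_h - ε₁ • gf_h)) = 0 := by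
  linear_combination (norm := skip) (-ε₃) • hf - ε₁ • hg - ε₂ • hh
  rcases h₁ with rfl | rfl <;> rcases h₂ with rfl | rfl <;> rcases h₃ with rfl | rfl <;> module

end

/-- The Gerstenhaber bracket on `C^•(V,V) = ⨁ₙ Hom(V^⊗n, V)` satisfies the graded
Jacobi identity (with an `n`-cochain placed in degree `n − 1`), making `C^•(V,V)[1]`
a graded Lie algebra. -/
theorem gerstenhaber_graded_jacobi {V : Type*} [AddCommGroup V] [Module ℂ V]
    (m n p : ℕ) (hm : 1 ≤ m) (hn : 1 ≤ n) (hp : 1 ≤ p)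
    (f : MultilinearMap ℂ (fun _ : Fin m => V) V)
    (g : MultilinearMap ℂ (fun _ : Fin n => V) V)
    (h : MultilinearMap ℂ (fun _ : Fin p => V) V) :
    ((-1 : ℤ) ^ ((m - 1) * (p - 1))) •
        gbracket m (ext f) (n + p - 1) (gbracket n (ext g) p (ext h))
      + ((-1 : ℤ) ^ ((n - 1) * (m - 1))) •
        gbracket n (ext g) (p + m - 1) (gbracket p (ext h) m (ext f))
      + ((-1 : ℤ) ^ ((p - 1) * (n - 1))) •
        gbracket p (ext h) (m + n - 1) (gbracket m (ext f) n (ext g)) = 0 := by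
  have assoc_f := gcirc_assoc_symm f hn hp g h
  have assoc_g := gcirc_assoc_symm g hp hm h f
  have assoc_h := gcirc_assoc_symm h hm hn f g
  simp only [gbracket, gcirc_ext_sub_zsmul_right, gcirc_sub_zsmul_left]
  rw [neg_one_pow_mul_add_sub_one (m - 1) hn hp, neg_one_pow_mul_add_sub_one (n - 1) hp hm,
    neg_one_pow_mul_add_sub_one (p - 1) hm hn, mul_comm (m - 1) (p - 1), mul_comm (n - 1) (m - 1),
    mul_comm (p - 1) (n - 1)]
  exact jacobi_of_rightPreLie (neg_one_pow_eq_or ℤ _) (neg_one_pow_eq_or ℤ _)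
    (neg_one_pow_eq_or ℤ _) assoc_f assoc_g assoc_h
end

section
/- If a B-algebra V (algebra over the little intervals operad) has trivial K-module structure, i.e., the semigroup K = B(1) of cylinders acts by the identity on V, then the (K,K²)-equivariance of the structure map m : B'(2) → Hom(V⊗V, V) forces m to be constant, and the resulting binary operation makes V an associative algebra. -/
/-- Let `V` be a `B`-algebra (algebra over the little intervals operad), with structure
map `m : B'(2) → Hom(V ⊗ V, V)`, where the Virasoro-type semigroup `K = B(1)` acts on
`B'(2)` on the output (`lAct`) and on the two inputs (`r1`, `r2`), and acts *trivially*
on `V` (so `(K,K²)`-equivariance of `m` reads `m_{k∘Σ} = m_{Σ∘ᵢk} = m_Σ`).  Assume the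
`K`-actions relate any two elements of `B'(2)` (`htrans`), and that the quadratic
associativity relations of `B` hold: every 4-point configuration `S ∈ B(3)` has two
decompositions into pairs of elements of `B'(2)` along which `m` composes equally
(`hrel`).  Then `m` is constant, and the resulting binary operation makes `V` an
associative algebra. -/
theorem trivial_K_action_forces_associative
    {V K B2 B3 : Type*} [AddCommGroup V] [Module ℂ V] [Nonempty B3]
    (m : B2 → V →ₗ[ℂ] V →ₗ[ℂ] V)
    (lAct : K → B2 → B2) (r1 r2 : B2 → K → B2)
    (dec11 dec12 dec21 dec22 : B3 → B2)
    (hequiv : ∀ (k : K) (S2 : B2),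
      m (lAct k S2) = m S2 ∧ m (r1 S2 k) = m S2 ∧ m (r2 S2 k) = m S2)
    (htrans : ∀ S2 S2' : B2, ∃ (k k₁ k₂ : K), S2' = lAct k (r2 (r1 S2 k₁) k₂))
    (hrel : ∀ (S : B3) (a b c : V),
      m (dec11 S) (m (dec12 S) a b) c = m (dec21 S) a (m (dec22 S) b c)) :
    (∀ S2 S2' : B2, m S2 = m S2') ∧
    (∀ (S2 : B2) (a b c : V), m S2 (m S2 a b) c = m S2 a (m S2 b c)) := by
  have hconst : ∀ S2 S2' : B2, m S2 = m S2' := by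
    intro S2 S2'
    obtain ⟨k, k₁, k₂, hk⟩ := htrans S2 S2'
    rw [hk, (hequiv k _).1, (hequiv k₂ _).2.2, (hequiv k₁ _).2.1]
  refine ⟨hconst, fun S2 a b c => ?_⟩
  obtain ⟨S⟩ := (inferInstance : Nonempty B3)
  have h := hrel S a b c
  rw [hconst (dec11 S) S2, hconst (dec12 S) S2, hconst (dec21 S) S2,
    hconst (dec22 S) S2] at h
  exact h
end

section
/- Let V be a vector space with an S_n-equivariant family of n-ary operations and suppose all operations are generated by a single binary operation m subject only to quadratic relations R ⊆ F(E)(3). If m' = m + tα is a first-order deformation satisfying the relations R modulo t², then (Y∘α + α∘Y)_r = 0 for every r ∈ R, i.e., dα = 0 in the quadratic-operad cochain complex; conversely every 2-cocycle α gives a first-order deformation. -/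
/-- Let `V` carry the structure of an algebra over a quadratic operad `Q(E,R)`, given
by a binary structure map `Y : E → Hom(V ⊗ V, V)`.  Each quadratic relation `r ∈ R`
(indexed by `ι`) is evaluated by a map `eval r`, bilinear in the operations placed at
the two vertices of its tree monomials (`hadd`/`hsmul` hypotheses); that `V` is a
`Q(E,R)`-algebra means `eval r Y Y = 0` for all `r` (`hY`).  Then the first-order
deformation `Y' = Y + tα` satisfies the relations `R` modulo `t²` (i.e.
`eval r Y' Y' ≡ 0 mod t²`, the remainder being the second-order term `t² eval r α α`)
if and only if `(Y∘α + α∘Y)_r = 0` for every `r ∈ R`, i.e. `dα = 0` in the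
quadratic-operad cochain complex; conversely every such 2-cocycle `α` gives a
first-order deformation. -/
theorem quadratic_operad_deformation_iff_cocycle
    {V ι : Type*} [AddCommGroup V] [Module ℂ V]
    (eval : ι → (V →ₗ[ℂ] V →ₗ[ℂ] V) → (V →ₗ[ℂ] V →ₗ[ℂ] V) →
      (V →ₗ[ℂ] V →ₗ[ℂ] V →ₗ[ℂ] V))
    (hadd1 : ∀ r f f' g, eval r (f + f') g = eval r f g + eval r f' g)
    (hsmul1 : ∀ r (c : ℂ) f g, eval r (c • f) g = c • eval r f g)
    (hadd2 : ∀ r f g g', eval r f (g + g') = eval r f g + eval r f g')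
    (hsmul2 : ∀ r f (c : ℂ) g, eval r f (c • g) = c • eval r f g)
    (Y α : V →ₗ[ℂ] V →ₗ[ℂ] V)
    (hY : ∀ r, eval r Y Y = 0) :
    (∀ (t : ℂ) (r : ι),
        eval r (Y + t • α) (Y + t • α) = (t ^ 2) • eval r α α) ↔
      ∀ r : ι, eval r Y α + eval r α Y = 0 := by
  have key : ∀ (t : ℂ) (r : ι),
      eval r (Y + t • α) (Y + t • α)
        = t • (eval r Y α + eval r α Y) + (t ^ 2) • eval r α α := by
    intro t r
    rw [hadd1, hadd2, hadd2, hsmul1, hsmul1, hsmul2, hsmul2, hY r]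
    simp only [smul_add, smul_smul]
    ring_nf
    abel
  constructor
  · intro h r
    have h1 := h 1 r
    rw [key 1 r] at h1
    simp only [one_smul, one_pow] at h1
    have := sub_eq_zero.mpr h1
    abel_nf at this ⊢
    exact this
  · intro h t r
    rw [key t r, h r, smul_zero, zero_add]
end
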